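/- arXiv:2008.12023 — 5 statements merged into one kernel-verified Lean document; each statement's English description precedes it below -/
import Mathlib

section
/- For any R, R' ∈ SO(n), there exists a skew-symmetric matrix W such that R' = R·exp(W) and all the nonzero eigenvalues of W are of the form ±iλ with λ ∈ (-π, π]. -/
open Matrix
noncomputable section

def SO (n : ℕ) : Set (Matrix (Fin n) (Fin n) ℝ) :=
  {R | Rᵀ * R = 1 ∧ R.det = 1}

/-- `μ` is a (complex) eigenvalue of the real matrix `W`. -/
def IsEigenvalue {n : ℕ} (W : Matrix (Fin n) (Fin n) ℝ) (μ : ℂ) : Prop :=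
  ∃ v : Fin n → ℂ, v ≠ 0 ∧ (W.map (Complex.ofReal)).mulVec v = μ • v

/-!
`Q := Rᵀ R'` is orthogonal with determinant one and commutes with its symmetric part `Q + Qᵀ`.
After an orthogonal change of basis `Q + Qᵀ = diagonal d`, and `Q` preserves every class
`{i | d i = v}`, where `|v| ≤ 2`. On such a class `Q` is the identity if `v = 2`, minus the
identity if `v = -2`, and otherwise `cos θ + sin θ • J` with `θ = arccos (v / 2) ∈ (0, π)`
and `J := (Q - cos θ) / sin θ`, a skew matrix with `J² = -1` on the class. Since `det Q = 1`
the `(-2)`-class has even size, so it too carries a skew `J` with `J² = -1`, and there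
`Q = exp (π J)`. Then `W := ∑ θ_v J_v` is skew, `exp W = Q`, and `W² = -diagonal (θ²)`, so
every eigenvalue of `W` is `± i θ` with `θ ∈ [0, π]`. Each `exp (θ J)` is computed through
the algebra map `ℝ × ℂ → Matrix` that sends `(0, i)` to `J`.
-/

open NormedSpace Real Finset

structure IsComplexStructureOn {A : Type*} [Ring A] (p J : A) : Prop where
  idem : IsIdempotentElem p
  proj_mul : p * J = J
  mul_proj : J * p = J
  mul_self : J * J = -p

namespace IsComplexStructureOn

section Ring

variable {A : Type*} [Ring A] {p q J K : A}

theorem mul_eq_zero (hJ : IsComplexStructureOn p J) (hK : IsComplexStructureOn q K)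
    (hpq : p * q = 0) : J * K = 0 := by
  rw [← hJ.mul_proj, ← hK.proj_mul, mul_assoc, ← mul_assoc p, hpq, zero_mul, mul_zero]

theorem mul_proj_eq_zero (hJ : IsComplexStructureOn p J) (hpq : p * q = 0) : J * q = 0 := by
  rw [← hJ.mul_proj, mul_assoc, hpq, mul_zero]

theorem proj_mul_eq_zero (hK : IsComplexStructureOn q K) (hpq : p * q = 0) : p * K = 0 := by
  rw [← hK.proj_mul, ← mul_assoc, hpq, zero_mul]

theorem smul_add_smul_mul_eq_zero {R : Type*} [CommRing R] [Algebra R A]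
    (hJ : IsComplexStructureOn p J) (hK : IsComplexStructureOn q K) (hpq : p * q = 0)
    (a b c d : R) : (a • p + b • J) * (c • q + d • K) = 0 := by
  simp only [add_mul, mul_add, smul_mul_smul_comm, hpq, hJ.mul_eq_zero hK hpq,
    hJ.mul_proj_eq_zero hpq, hK.proj_mul_eq_zero hpq, smul_zero, add_zero]

end Ring

section Algebra

variable {A : Type*} [NormedRing A] [NormedAlgebra ℝ A] {p J : A}

/-- The embedding `(r, a + b i) ↦ r (1 - p) + a p + b J`. -/
def algHom (h : IsComplexStructureOn p J) : ℝ × ℂ →ₐ[ℝ] A :=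
  AlgHom.ofLinearMap
    ((LinearMap.fst ℝ ℝ ℂ).smulRight (1 - p) +
      (Complex.reLm.comp (LinearMap.snd ℝ ℝ ℂ)).smulRight p +
      (Complex.imLm.comp (LinearMap.snd ℝ ℝ ℂ)).smulRight J)
    (by simp)
    (by
      rintro ⟨r, z⟩ ⟨s, w⟩
      have h1 : (1 - p) * (1 - p) = 1 - p := h.idem.one_sub.eq
      have h2 : (1 - p) * p = 0 := by noncomm_ring [h.idem.eq]
      have h3 : p * (1 - p) = 0 := by noncomm_ring [h.idem.eq]
      have h4 : (1 - p) * J = 0 := by noncomm_ring [h.proj_mul]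
      have h5 : J * (1 - p) = 0 := by noncomm_ring [h.mul_proj]
      simp only [LinearMap.add_apply, LinearMap.smulRight_apply, LinearMap.coe_comp,
        Function.comp_apply, LinearMap.fst_apply, LinearMap.snd_apply, Complex.reLm_coe,
        Complex.imLm_coe, Prod.mk_mul_mk, Complex.mul_re, Complex.mul_im, add_mul, mul_add,
        smul_mul_smul_comm, h1, h2, h3, h4, h5, h.idem.eq, h.proj_mul, h.mul_proj, h.mul_self]
      module)

theorem exp_smul (h : IsComplexStructureOn p J) (t : ℝ) :
    exp (t • J) = 1 + ((cos t - 1) • p + sin t • J) := by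
  have hcont : Continuous h.algHom :=
    LinearMap.continuous_of_finiteDimensional h.algHom.toLinearMap
  have hJ : t • J = h.algHom (0, t * Complex.I) := by simp [algHom]
  have hexp : exp ((0 : ℝ), (t : ℂ) * Complex.I) = (1, Complex.exp (t * Complex.I)) := by
    ext <;> simp [Complex.exp_eq_exp_ℂ]
  rw [hJ, ← map_exp_of_mem_ball (𝕂 := ℝ) _ hcont _
    ((expSeries_radius_eq_top ℝ (ℝ × ℂ)).symm ▸ edist_lt_top _ _), hexp]
  simp [algHom, Complex.exp_ofReal_mul_I_re, Complex.exp_ofReal_mul_I_im]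
  module

end Algebra

end IsComplexStructureOn

section Sum

variable {A ι : Type*} {p J : ι → A}

theorem sum_smul_mul_self_of_isComplexStructureOn {R : Type*} [CommRing R] [Ring A]
    [Algebra R A] (F : Finset ι) (t : ι → R)
    (hJ : ∀ i ∈ F, IsComplexStructureOn (p i) (J i))
    (hp : (F : Set ι).Pairwise fun i j => p i * p j = 0) :
    (∑ i ∈ F, t i • J i) * (∑ i ∈ F, t i • J i) = -∑ i ∈ F, t i ^ 2 • p i := by
  rw [sum_mul_sum, ← sum_neg_distrib]
  refine sum_congr rfl fun i hi => ?_
  rw [sum_eq_single_of_mem i hi fun j hj hji => ?_, smul_mul_smul_comm,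
    (hJ i hi).mul_self, smul_neg, sq]
  rw [smul_mul_smul_comm, (hJ i hi).mul_eq_zero (hJ j hj) (hp hi hj hji.symm), smul_zero]

variable [NormedRing A] [NormedAlgebra ℝ A] [CompleteSpace A]

theorem exp_sum_smul_of_isComplexStructureOn (F : Finset ι) (t : ι → ℝ)
    (hJ : ∀ i ∈ F, IsComplexStructureOn (p i) (J i))
    (hp : (F : Set ι).Pairwise fun i j => p i * p j = 0) :
    exp (∑ i ∈ F, t i • J i) =
      1 + ∑ i ∈ F, ((cos (t i) - 1) • p i + sin (t i) • J i) := by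
  classical
  induction F using Finset.induction_on with
  | empty => simp
  | insert a F ha ih =>
    have hJ' : ∀ i ∈ F, IsComplexStructureOn (p i) (J i) := fun i hi =>
      hJ i (mem_insert_of_mem hi)
    have hJa := hJ a (mem_insert_self a F)
    have hpa : ∀ i ∈ F, p a * p i = 0 ∧ p i * p a = 0 := fun i hi =>
      have hia : a ≠ i := fun h => ha (h ▸ hi)
      ⟨hp (by simp) (by simp [hi]) hia, hp (by simp [hi]) (by simp) hia.symm⟩
    have hcomm : Commute (t a • J a) (∑ i ∈ F, t i • J i) := by
      refine Commute.sum_right _ _ _ fun i hi => ?_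
      rw [Commute, SemiconjBy, smul_mul_smul_comm, smul_mul_smul_comm,
        hJa.mul_eq_zero (hJ' i hi) (hpa i hi).1, (hJ' i hi).mul_eq_zero hJa (hpa i hi).2,
        smul_zero, smul_zero]
    have horth : ((cos (t a) - 1) • p a + sin (t a) • J a) *
        ∑ i ∈ F, ((cos (t i) - 1) • p i + sin (t i) • J i) = 0 := by
      rw [mul_sum]
      exact sum_eq_zero fun i hi =>
        hJa.smul_add_smul_mul_eq_zero (hJ' i hi) (hpa i hi).1 _ _ _ _
    rw [sum_insert ha, sum_insert ha,
      exp_add_of_commute_of_mem_ball (𝕂 := ℝ) hcomm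
        ((expSeries_radius_eq_top ℝ A).symm ▸ edist_lt_top _ _)
        ((expSeries_radius_eq_top ℝ A).symm ▸ edist_lt_top _ _),
      hJa.exp_smul, ih hJ' (hp.mono (by simp)), add_mul, one_mul, mul_add, mul_one, horth]
    abel

end Sum

section ClassProj

variable {n : Type*} [DecidableEq n] (d : n → ℝ)

def classProj (v : ℝ) : Matrix n n ℝ :=
  diagonal fun i => if d i = v then 1 else 0

theorem classProj_transpose (v : ℝ) : (classProj d v)ᵀ = classProj d v :=
  diagonal_transpose _

theorem sum_smul_classProj (F : Finset ℝ) (c : ℝ → ℝ) :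
    ∑ v ∈ F, c v • classProj d v = diagonal fun i => if d i ∈ F then c (d i) else 0 := by
  ext i j
  rcases eq_or_ne i j with rfl | hij
  · simp [classProj, Matrix.sum_apply, sum_ite_eq]
  · simp [classProj, Matrix.sum_apply, hij]

theorem sum_classProj (F : Finset ℝ) :
    ∑ v ∈ F, classProj d v = diagonal fun i => if d i ∈ F then 1 else 0 := by
  simpa using sum_smul_classProj d F 1

variable [Fintype n]

theorem isIdempotentElem_classProj (v : ℝ) : IsIdempotentElem (classProj d v) := by
  rw [IsIdempotentElem, classProj, diagonal_mul_diagonal]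
  congr 1
  ext i
  split_ifs <;> simp

theorem classProj_mul_classProj_of_ne {v w : ℝ} (hvw : v ≠ w) :
    classProj d v * classProj d w = 0 := by
  rw [classProj, classProj, diagonal_mul_diagonal, ← diagonal_zero]
  congr 1
  ext i
  split_ifs with h1 h2 <;> simp_all

theorem diagonal_mul_classProj (v : ℝ) : diagonal d * classProj d v = v • classProj d v := by
  ext i j
  rcases eq_or_ne i j with rfl | hij
  · by_cases h : d i = v <;> simp [classProj, h]
  · simp [classProj, hij]

theorem sum_classProj_image_sdiff (S : Finset ℝ) :
    ∑ v ∈ univ.image d \ S, classProj d v = 1 - ∑ v ∈ S, classProj d v := by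
  rw [sum_classProj, sum_classProj, ← diagonal_one, diagonal_sub]
  congr 1
  ext i
  by_cases h : d i ∈ S <;> simp [h]

variable {d} in
theorem commute_classProj_of_commute {X : Matrix n n ℝ} (hX : Commute X (diagonal d)) (v : ℝ) :
    Commute X (classProj d v) := by
  ext i j
  have hij : X i j * d j = d i * X i j := by simpa using congrFun (congrFun hX.eq i) j
  by_cases hi : d i = v <;> by_cases hj : d j = v <;>
    simp_all [classProj, mul_diagonal, diagonal_mul, mul_comm, eq_comm]

end ClassProj

theorem exists_transpose_mul_mul_eq_diagonal {n : Type*} [Fintype n] [DecidableEq n]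
    {S : Matrix n n ℝ} (hS : Sᵀ = S) :
    ∃ (P : Matrix n n ℝ) (d : n → ℝ), Pᵀ * P = 1 ∧ Pᵀ * S * P = diagonal d := by
  have hH : S.IsHermitian := by rwa [IsHermitian, conjTranspose_eq_transpose_of_trivial]
  have hstar (P : Matrix n n ℝ) : star P = Pᵀ := conjTranspose_eq_transpose_of_trivial P
  refine ⟨hH.eigenvectorUnitary, hH.eigenvalues, ?_, ?_⟩
  · rw [← hstar]; exact Unitary.coe_star_mul_self _
  · have := hH.conjStarAlgAut_star_eigenvectorUnitary
    rw [Unitary.conjStarAlgAut_star_apply, hstar] at this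
    simpa using this

section Orthogonal

variable {n : Type*} [Fintype n] [DecidableEq n] {Q p : Matrix n n ℝ}

structure IsRotationOn (Q p J : Matrix n n ℝ) (θ : ℝ) : Prop where
  isComplexStructureOn : IsComplexStructureOn p J
  transpose_eq_neg : Jᵀ = -J
  mul_proj : Q * p = cos θ • p + sin θ • J

theorem commute_add_transpose_of_orthogonal (hQ : Qᵀ * Q = 1) : Commute Q (Q + Qᵀ) := by
  rw [Commute, SemiconjBy, mul_add, add_mul, hQ, mul_eq_one_comm.mp hQ]

theorem mul_eq_self_of_add_transpose_mul_eq (hQ : Qᵀ * Q = 1) (hp : pᵀ = p)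
    (hQp : (Q + Qᵀ) * p = (2 : ℝ) • p) : Q * p = p := by
  have hsq : (Qᵀ - 1) * (Q - 1) = (2 : ℝ) • 1 - (Q + Qᵀ) := by
    simp only [sub_mul, mul_sub, hQ, mul_one, one_mul]
    module
  have hX : ((Q - 1) * p)ᴴ * ((Q - 1) * p) = 0 := by
    rw [conjTranspose_eq_transpose_of_trivial, transpose_mul, hp, transpose_sub, transpose_one,
      Matrix.mul_assoc, ← Matrix.mul_assoc _ _ p, hsq, sub_mul, hQp, smul_mul_assoc, one_mul,
      sub_self, mul_zero]
  simpa [sub_mul, sub_eq_zero] using conjTranspose_mul_self_eq_zero.mp hX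

theorem exists_isRotationOn_of_orthogonal (hQ : Qᵀ * Q = 1) (hp : IsIdempotentElem p)
    (hpT : pᵀ = p) (hQp : Commute Q p) {θ : ℝ} (hs : sin θ ≠ 0)
    (hD : (Q + Qᵀ) * p = (2 * cos θ) • p) :
    ∃ J, IsRotationOn Q p J θ := by
  have hXp : Q * p * p = Q * p := by rw [Matrix.mul_assoc, hp.eq]
  have hpX : p * (Q * p) = Q * p := by rw [← Matrix.mul_assoc, ← hQp.eq, hXp]
  have hXX : Q * p * (Q * p) = (2 * cos θ) • (Q * p) - p := by
    have h := congrArg (Q * ·) hD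
    simp only [mul_add, ← Matrix.mul_assoc, mul_eq_one_comm.mp hQ, Matrix.mul_smul] at h
    rw [Matrix.mul_assoc, ← Matrix.mul_assoc p, ← hQp.eq, Matrix.mul_assoc, hp.eq,
      ← Matrix.mul_assoc, eq_sub_iff_add_eq, ← h, add_mul, Matrix.one_mul]
  have hXT : (Q * p)ᵀ = (2 * cos θ) • p - Q * p := by
    have h : (p * Q)ᵀ = (Q * p)ᵀ := by rw [hQp.eq]
    rw [transpose_mul, transpose_mul, hpT] at h
    rw [← hD, add_mul, add_sub_cancel_left, transpose_mul, hpT, h]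
  have hsq : (Q * p - cos θ • p) * (Q * p - cos θ • p) = -(sin θ ^ 2) • p := by
    simp only [sub_mul, mul_sub, smul_mul_assoc, mul_smul_comm, hXp, hpX, hp.eq, hXX, sin_sq]
    module
  refine ⟨(sin θ)⁻¹ • (Q * p - cos θ • p), ⟨hp, ?_, ?_, ?_⟩, ?_, ?_⟩
  · rw [mul_smul_comm, mul_sub, mul_smul_comm, hpX, hp.eq]
  · rw [smul_mul_assoc, sub_mul, smul_mul_assoc, hXp, hp.eq]
  · rw [smul_mul_smul_comm, hsq, smul_smul]
    field_simp
    module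
  · rw [transpose_smul, transpose_sub, transpose_smul, hXT, hpT]
    module
  · rw [smul_smul, mul_inv_cancel₀ hs, one_smul, add_sub_cancel]

end Orthogonal

theorem isComplexStructureOn_transpose_mul_mul {m n R : Type*} [Fintype m] [Fintype n]
    [DecidableEq m] [DecidableEq n] [CommRing R] {L : Matrix m n R} (hL : L * Lᵀ = 1)
    {J : Matrix m m R} (hJ : J * J = -1) :
    IsComplexStructureOn (Lᵀ * L) (Lᵀ * J * L) := by
  have hL' (X : Matrix m n R) : L * (Lᵀ * X) = X := by
    rw [← Matrix.mul_assoc, hL, Matrix.one_mul]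
  have hJ' (X : Matrix m n R) : J * (J * X) = -X := by
    rw [← Matrix.mul_assoc, hJ, Matrix.neg_mul, Matrix.one_mul]
  refine ⟨?_, ?_, ?_, ?_⟩ <;>
    simp only [IsIdempotentElem, Matrix.mul_assoc, hL', hJ', Matrix.mul_neg]

/-- On a coordinate subspace of even dimension `k + k`, pair the coordinates through
`Fin k ⊕ Fin k` and rotate each pair by `!![0, -1; 1, 0]`. -/
theorem exists_isComplexStructureOn_of_even_card {n : Type*} [Fintype n] [DecidableEq n]
    (s : Finset n) (hs : Even #s) :
    ∃ K : Matrix n n ℝ,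
      IsComplexStructureOn (diagonal fun i => if i ∈ s then 1 else 0) K ∧ Kᵀ = -K := by
  obtain ⟨k, hk⟩ := hs
  let e : Fin k ⊕ Fin k ≃ s := finSumFinEquiv.trans ((finCongr hk.symm).trans s.equivFin.symm)
  let L : Matrix (Fin k ⊕ Fin k) n ℝ := (1 : Matrix n n ℝ).submatrix (fun x => e x) id
  let J : Matrix (Fin k ⊕ Fin k) (Fin k ⊕ Fin k) ℝ := fromBlocks 0 (-1) 1 0
  have hL : L * Lᵀ = 1 := by
    rw [transpose_submatrix, ← submatrix_mul _ _ _ _ _ Function.bijective_id, transpose_one,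
      Matrix.mul_one, submatrix_one (fun x => (e x : n)) (Subtype.val_injective.comp e.injective)]
  have hJ : J * J = -1 := by
    simp [J, fromBlocks_multiply, ← fromBlocks_one, fromBlocks_neg]
  have hLL : Lᵀ * L = diagonal fun i => if i ∈ s then 1 else 0 := by
    ext i j
    simp only [L, transpose_submatrix, mul_apply, submatrix_apply, transpose_one, one_apply,
      id, diagonal_apply]
    let f : n → ℝ := fun y => (if i = y then 1 else 0) * if y = j then 1 else 0
    rw [Fintype.sum_equiv e _ (fun y : s => f y) fun _ => rfl, sum_coe_sort s f]
    by_cases hij : i = j <;> simp [f, hij]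
  have hJT : Jᵀ = -J := by simp [J, fromBlocks_transpose, fromBlocks_neg]
  refine ⟨Lᵀ * J * L, hLL ▸ isComplexStructureOn_transpose_mul_mul hL hJ, ?_⟩
  rw [transpose_mul, transpose_mul, transpose_transpose, hJT, Matrix.neg_mul, Matrix.mul_neg,
    Matrix.mul_assoc]

theorem det_exp_pos {n : Type*} [Fintype n] [DecidableEq n] (W : Matrix n n ℝ) :
    0 < (exp W).det := by
  have h : exp W = exp ((1 / 2 : ℝ) • W) * exp ((1 / 2 : ℝ) • W) := by
    rw [← Matrix.exp_add_of_commute _ _ (Commute.refl _), ← add_smul]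
    norm_num
  rw [h, det_mul]
  exact mul_self_pos.mpr
    ((Matrix.isUnit_iff_isUnit_det _).mp (Matrix.isUnit_exp ((1 / 2 : ℝ) • W))).ne_zero

section AddTransposeDiagonal

variable {n : Type*} [Fintype n] [DecidableEq n] {Q : Matrix n n ℝ} {d : n → ℝ}

open scoped Norms.Operator in
theorem exp_sum_smul_of_isRotationOn (F : Finset ℝ) (J : ℝ → Matrix n n ℝ)
    (θ : ℝ → ℝ) (hJ : ∀ v ∈ F, IsRotationOn Q (classProj d v) (J v) (θ v)) :
    exp (∑ v ∈ F, θ v • J v) = 1 + (Q - 1) * ∑ v ∈ F, classProj d v := by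
  refine (exp_sum_smul_of_isComplexStructureOn F _ (fun v hv => (hJ v hv).isComplexStructureOn)
    fun v _ w _ hvw => classProj_mul_classProj_of_ne d hvw).trans ?_
  rw [mul_sum]
  congr 1
  refine sum_congr rfl fun v hv => ?_
  rw [sub_mul, (hJ v hv).mul_proj, one_mul, sub_smul, one_smul]
  abel

variable (hQ : Qᵀ * Q = 1) (hD : Q + Qᵀ = diagonal d)
include hQ hD

theorem abs_le_two_of_add_transpose_eq_diagonal (i : n) : |d i| ≤ 2 := by
  have hQu : Q ∈ unitaryGroup n ℝ := by
    rwa [mem_unitaryGroup_iff', star_eq_conjTranspose, conjTranspose_eq_transpose_of_trivial]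
  have hd : d i = 2 * Q i i := by
    have := congrFun (congrFun hD i) i
    simp only [Matrix.add_apply, transpose_apply, diagonal_apply_eq] at this
    linarith
  have := entry_norm_bound_of_unitary hQu i i
  rw [norm_eq_abs] at this
  rw [hd, abs_mul, abs_two]
  linarith

theorem mul_classProj_two : Q * classProj d 2 = classProj d 2 :=
  mul_eq_self_of_add_transpose_mul_eq hQ (classProj_transpose d 2) (by
    rw [hD, diagonal_mul_classProj])

theorem mul_classProj_neg_two : Q * classProj d (-2) = -classProj d (-2) := by
  have h := mul_eq_self_of_add_transpose_mul_eq (Q := -Q) (by simpa using hQ)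
    (classProj_transpose d (-2)) (by
      rw [transpose_neg, ← neg_add, hD, Matrix.neg_mul, diagonal_mul_classProj, neg_smul,
        neg_neg])
  rwa [Matrix.neg_mul, neg_eq_iff_eq_neg] at h

theorem exists_isRotationOn_classProj {v : ℝ} (hv : v ∈ Set.range d) (hv2 : v ≠ 2)
    (hv2' : v ≠ -2) : ∃ J, IsRotationOn Q (classProj d v) J (arccos (v / 2)) := by
  obtain ⟨i, rfl⟩ := hv
  have hi := abs_le (b := (2 : ℝ)).mp (abs_le_two_of_add_transpose_eq_diagonal hQ hD i)
  have h1 : -1 < d i / 2 := lt_of_le_of_ne (by linarith) (by contrapose! hv2'; linarith)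
  have h2 : d i / 2 < 1 := lt_of_le_of_ne (by linarith) (by contrapose! hv2; linarith)
  refine exists_isRotationOn_of_orthogonal hQ (isIdempotentElem_classProj d _)
    (classProj_transpose d _)
    (commute_classProj_of_commute (hD ▸ commute_add_transpose_of_orthogonal hQ) _) ?_ ?_
  · rw [sin_arccos]
    exact (sqrt_pos.mpr (by nlinarith)).ne'
  · rw [cos_arccos h1.le h2.le, mul_div_cancel₀ _ two_ne_zero, hD, diagonal_mul_classProj]

/-- With `W₀` the rotation generator on the classes `v ≠ ±2`,
`exp W₀ = Q + 2 • classProj d (-2)` and `Q = exp W₀ * (1 - 2 • classProj d (-2))`;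
as `det (exp W₀) > 0`, the sign `(-1) ^ #{i | d i = -2}` must be `1`. -/
theorem even_card_neg_two (hdet : Q.det = 1) : Even #{i | d i = -2} := by
  set F := univ.image d \ {2, -2}
  have hrot : ∀ v ∈ F, ∃ J, IsRotationOn Q (classProj d v) J (arccos (v / 2)) := by
    intro v hv
    simp only [F, mem_sdiff, mem_image, mem_univ, true_and, mem_insert, mem_singleton,
      not_or] at hv
    exact exists_isRotationOn_classProj hQ hD hv.1 hv.2.1 hv.2.2
  choose! J hJ using hrot
  set W₀ := ∑ v ∈ F, arccos (v / 2) • J v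
  have hpm := (isIdempotentElem_classProj d (-2)).eq
  have hexp : exp W₀ = Q + (2 : ℝ) • classProj d (-2) := by
    rw [exp_sum_smul_of_isRotationOn F J _ hJ, sum_classProj_image_sdiff, sum_pair (by norm_num)]
    simp only [sub_mul, mul_sub, mul_add, one_mul, mul_one, mul_classProj_two hQ hD,
      mul_classProj_neg_two hQ hD]
    module
  have hfactor : exp W₀ * (1 - (2 : ℝ) • classProj d (-2)) = Q := by
    simp only [hexp, add_mul, mul_sub, mul_one, smul_mul_assoc, mul_smul_comm,
      mul_classProj_neg_two hQ hD, hpm]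
    module
  have hdiag :
      1 - (2 : ℝ) • classProj d (-2) = diagonal fun i => if d i = -2 then -1 else 1 := by
    rw [classProj, ← diagonal_one, ← diagonal_smul, diagonal_sub]
    congr 1
    ext i
    by_cases h : d i = -2 <;> simp [h]
    norm_num
  have hdet' := congrArg det hfactor
  rw [det_mul, hdiag, det_diagonal, prod_ite, prod_const, prod_const, one_pow, mul_one,
    hdet] at hdet'
  by_contra hodd
  rw [(Nat.not_even_iff_odd.mp hodd).neg_one_pow] at hdet'
  linarith [det_exp_pos W₀]

theorem exists_skew_log_of_add_transpose_eq_diagonal (hdet : Q.det = 1) :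
    ∃ W : Matrix n n ℝ, Wᵀ = -W ∧ exp W = Q ∧
      ∃ θ : n → ℝ, (∀ i, θ i ∈ Set.Icc 0 π) ∧
        W * W = -diagonal fun i => θ i ^ 2 := by
  set F := univ.image d \ {2}
  have hrot : ∀ v ∈ F, ∃ J, IsRotationOn Q (classProj d v) J (arccos (v / 2)) := by
    intro v hv
    simp only [F, mem_sdiff, mem_image, mem_univ, true_and, mem_singleton] at hv
    by_cases hv2 : v = -2
    · subst hv2
      obtain ⟨K, hK, hKT⟩ :=
        exists_isComplexStructureOn_of_even_card _ (even_card_neg_two hQ hD hdet)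
      exact ⟨K, by simpa [classProj] using hK, hKT, by norm_num [mul_classProj_neg_two hQ hD]⟩
    · exact exists_isRotationOn_classProj hQ hD hv.1 hv.2 hv2
  choose! J hJ using hrot
  refine ⟨∑ v ∈ F, arccos (v / 2) • J v, ?_, ?_,
    fun i => if d i ∈ F then arccos (d i / 2) else 0, fun i => ?_, ?_⟩
  · rw [transpose_sum, ← sum_neg_distrib]
    exact sum_congr rfl fun v hv => by rw [transpose_smul, (hJ v hv).transpose_eq_neg, smul_neg]
  · rw [exp_sum_smul_of_isRotationOn F J _ hJ, sum_classProj_image_sdiff, sum_singleton,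
      mul_sub, mul_one, sub_mul, mul_classProj_two hQ hD, one_mul]
    abel
  · dsimp only
    split_ifs
    exacts [⟨arccos_nonneg _, arccos_le_pi _⟩, ⟨le_rfl, pi_pos.le⟩]
  · rw [sum_smul_mul_self_of_isComplexStructureOn F _ (fun v hv => (hJ v hv).isComplexStructureOn)
      fun v _ w _ hvw => classProj_mul_classProj_of_ne d hvw, sum_smul_classProj]
    congr 2
    ext i
    by_cases h : d i ∈ F <;> simp [h]

end AddTransposeDiagonal

namespace IsEigenvalue

variable {N : ℕ} {W : Matrix (Fin N) (Fin N) ℝ} {μ : ℂ}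

theorem of_conj {P : Matrix (Fin N) (Fin N) ℝ} (hP : Pᵀ * P = 1)
    (h : IsEigenvalue (P * W * Pᵀ) μ) : IsEigenvalue W μ := by
  obtain ⟨v, hv0, hv⟩ := h
  let φ := (Complex.ofRealHom : ℝ →+* ℂ).mapMatrix (m := Fin N)
  change φ (P * W * Pᵀ) *ᵥ v = μ • v at hv
  refine ⟨φ Pᵀ *ᵥ v, fun h0 => hv0 ?_, ?_⟩
  · have := congrArg (φ P *ᵥ ·) h0
    simpa only [mulVec_mulVec, ← map_mul, mul_eq_one_comm.mp hP, map_one, one_mulVec,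
      mulVec_zero] using this
  · change φ W *ᵥ (φ Pᵀ *ᵥ v) = μ • (φ Pᵀ *ᵥ v)
    rw [← mulVec_smul, ← hv, mulVec_mulVec, mulVec_mulVec, ← map_mul, ← map_mul]
    simp only [← Matrix.mul_assoc, hP, Matrix.one_mul]

theorem exists_eq_I_mul {θ : Fin N → ℝ} (hW : W * W = -diagonal fun i => θ i ^ 2)
    (h : IsEigenvalue W μ) : ∃ i, μ = Complex.I * θ i ∨ μ = -(Complex.I * θ i) := by
  obtain ⟨v, hv0, hv⟩ := h
  obtain ⟨i, hvi⟩ := Function.ne_iff.mp hv0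
  let φ := (Complex.ofRealHom : ℝ →+* ℂ).mapMatrix (m := Fin N)
  change φ W *ᵥ v = μ • v at hv
  have hsq : φ (W * W) *ᵥ v = (μ * μ) • v := by
    rw [map_mul, ← mulVec_mulVec, hv, mulVec_smul, hv, smul_smul]
  rw [hW, map_neg, RingHom.mapMatrix_apply, diagonal_map (map_zero _), neg_mulVec] at hsq
  have hi := congrFun hsq i
  simp only [Pi.neg_apply, mulVec_diagonal, Pi.smul_apply, smul_eq_mul,
    Complex.ofRealHom_eq_coe] at hi
  refine ⟨i, ?_⟩
  have hfac : (μ - Complex.I * θ i) * (μ + Complex.I * θ i) * v i = 0 := by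
    push_cast at hi
    linear_combination -hi - (θ i : ℂ) ^ 2 * v i * Complex.I_sq
  rcases mul_eq_zero.mp ((mul_eq_zero.mp hfac).resolve_right hvi) with h | h
  · exact Or.inl (sub_eq_zero.mp h)
  · exact Or.inr (eq_neg_of_add_eq_zero_left h)

end IsEigenvalue

theorem exists_skew_log_of_orthogonal {N : ℕ} {Q : Matrix (Fin N) (Fin N) ℝ} (hQ : Qᵀ * Q = 1)
    (hdet : Q.det = 1) :
    ∃ W : Matrix (Fin N) (Fin N) ℝ, Wᵀ = -W ∧ exp W = Q ∧
      ∀ μ, IsEigenvalue W μ →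
        ∃ θ ∈ Set.Icc 0 π, μ = Complex.I * θ ∨ μ = -(Complex.I * θ) := by
  obtain ⟨P, d, hP, hPD⟩ := exists_transpose_mul_mul_eq_diagonal (S := Q + Qᵀ)
    (by rw [transpose_add, transpose_transpose, add_comm])
  have hP' : P * Pᵀ = 1 := mul_eq_one_comm.mp hP
  have hQ' : (Pᵀ * Q * P)ᵀ * (Pᵀ * Q * P) = 1 := by
    simp only [transpose_mul, transpose_transpose, Matrix.mul_assoc]
    rw [← Matrix.mul_assoc P, hP', Matrix.one_mul, ← Matrix.mul_assoc Qᵀ, hQ, Matrix.one_mul,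
      hP]
  have hdet' : (Pᵀ * Q * P).det = 1 := by
    rw [det_mul, det_mul, hdet, mul_one, ← det_mul, hP, det_one]
  have hD' : Pᵀ * Q * P + (Pᵀ * Q * P)ᵀ = diagonal d := by
    rw [← hPD, transpose_mul, transpose_mul, transpose_transpose, Matrix.mul_add, Matrix.add_mul]
    simp only [Matrix.mul_assoc]
  obtain ⟨W, hWT, hexp, θ, hθ, hWW⟩ :=
    exists_skew_log_of_add_transpose_eq_diagonal hQ' hD' hdet'
  refine ⟨P * W * Pᵀ, ?_, ?_, fun μ hμ => ?_⟩
  · rw [transpose_mul, transpose_mul, transpose_transpose, hWT, Matrix.neg_mul, Matrix.mul_neg,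
      Matrix.mul_assoc]
  · refine (Matrix.exp_units_conj ⟨P, Pᵀ, hP', hP⟩ W).trans ?_
    change P * exp W * Pᵀ = Q
    simp only [hexp, ← Matrix.mul_assoc, hP', Matrix.one_mul]
    rw [Matrix.mul_assoc, hP', Matrix.mul_one]
  · obtain ⟨i, hi⟩ := (hμ.of_conj hP).exists_eq_I_mul hWW
    exact ⟨θ i, hθ i, hi⟩

/-- For any `R, R' ∈ SO(n)` there is a skew-symmetric `W` with `R' = R·exp(W)` all of whose
nonzero eigenvalues are of the form `±iλ` with `λ ∈ (-π, π]`. -/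
theorem exists_log_with_small_eigenvalues (n : ℕ) (R R' : Matrix (Fin n) (Fin n) ℝ)
    (hR : R ∈ SO n) (hR' : R' ∈ SO n) :
    ∃ W : Matrix (Fin n) (Fin n) ℝ, Wᵀ = -W ∧ R' = R * NormedSpace.exp W ∧
      ∀ μ : ℂ, IsEigenvalue W μ → μ ≠ 0 →
        ∃ lam : ℝ, lam ∈ Set.Ioc (-Real.pi) Real.pi ∧
          (μ = Complex.I * lam ∨ μ = -(Complex.I * lam)) := by
  obtain ⟨hRo, hRdet⟩ := hR
  obtain ⟨hR'o, hR'det⟩ := hR'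
  have hRo' : R * Rᵀ = 1 := mul_eq_one_comm.mp hRo
  obtain ⟨W, hWT, hexp, hW⟩ := exists_skew_log_of_orthogonal (Q := Rᵀ * R')
    (by rw [transpose_mul, transpose_transpose, Matrix.mul_assoc, ← Matrix.mul_assoc R, hRo',
      Matrix.one_mul, hR'o])
    (by rw [det_mul, det_transpose, hRdet, hR'det, one_mul])
  refine ⟨W, hWT, by rw [hexp, ← Matrix.mul_assoc, hRo', Matrix.one_mul], fun μ hμ _ => ?_⟩
  obtain ⟨θ, hθ, hμθ⟩ := hW μ hμ
  exact ⟨θ, ⟨by linarith [pi_pos, hθ.1], hθ.2⟩, hμθ⟩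
end
end

section
/- Let F be a linear functional on n×n real matrices maximized over SO(n) at R₀. Then for every R ∈ SO(n) and every index i, F(R₀ Rᵀ Dᵢ R) ≥ 0, where Dᵢ is the diagonal matrix with entries 1 at positions 2i−1 and 2i and zeros elsewhere. -/
/-!
The matrix `1 - 2 Dᵢ` is the half-turn in the coordinate plane of positions `2i, 2i+1`, a product
of two coordinate reflections, so `Q = Rᵀ (1 - 2 Dᵢ) R = 1 - 2 Rᵀ Dᵢ R` lies in `SO(n)`. Maximality
of `R₀` then gives `F R₀ ≥ F (R₀ Q) = F R₀ - 2 F (R₀ Rᵀ Dᵢ R)`.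
-/

open Matrix
noncomputable section

namespace Matrix

variable {ι 𝕜 : Type*} [DecidableEq ι] [CommRing 𝕜]

def coordReflection (i : ι) : Matrix ι ι 𝕜 := diagonal (Pi.mulSingle i (-1))

lemma coordReflection_eq_one_sub (i : ι) :
    coordReflection i = (1 - 2 • single i i 1 : Matrix ι ι 𝕜) := by
  ext j k
  rcases eq_or_ne j k with rfl | hjk
  · rcases eq_or_ne i j with rfl | hij
    · norm_num [coordReflection]
    · simp [coordReflection, hij, hij.symm]
  · simp only [coordReflection, diagonal_apply_ne _ hjk, sub_apply, one_apply_ne hjk, smul_apply,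
      single_apply_of_ne _ _ _ _ _ fun h => hjk (h.1.symm.trans h.2), smul_zero, sub_zero]

variable [Fintype ι]

lemma transpose_mem_specialOrthogonalGroup {A : Matrix ι ι 𝕜}
    (hA : A ∈ specialOrthogonalGroup ι 𝕜) : Aᵀ ∈ specialOrthogonalGroup ι 𝕜 := by
  rw [mem_specialOrthogonalGroup_iff, mem_orthogonalGroup_iff] at hA ⊢
  rwa [transpose_transpose, det_transpose, mul_eq_one_comm]

lemma det_coordReflection (i : ι) : (coordReflection i : Matrix ι ι 𝕜).det = -1 := by
  rw [coordReflection, det_diagonal, Finset.prod_pi_mulSingle', if_pos (Finset.mem_univ i)]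

lemma coordReflection_mem_orthogonalGroup (i : ι) :
    (coordReflection i : Matrix ι ι 𝕜) ∈ orthogonalGroup ι 𝕜 := by
  rw [mem_orthogonalGroup_iff, coordReflection, diagonal_transpose, diagonal_mul_diagonal,
    ← Pi.mul_def, ← Pi.mulSingle_mul, neg_one_mul, neg_neg, Pi.mulSingle_one]
  exact diagonal_one

lemma coordReflection_mul_coordReflection {i j : ι} (hij : i ≠ j) :
    coordReflection i * coordReflection j =
      (1 - 2 • (single i i 1 + single j j 1) : Matrix ι ι 𝕜) := by
  simp only [coordReflection_eq_one_sub, sub_mul, mul_sub, one_mul, mul_one, smul_mul_smul,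
    nsmul_add]
  rw [single_mul_single_of_ne _ _ _ _ hij, smul_zero]
  abel

lemma one_sub_two_nsmul_single_add_single_mem_specialOrthogonalGroup {i j : ι} (hij : i ≠ j) :
    (1 - 2 • (single i i 1 + single j j 1) : Matrix ι ι 𝕜) ∈ specialOrthogonalGroup ι 𝕜 := by
  rw [← coordReflection_mul_coordReflection hij, mem_specialOrthogonalGroup_iff]
  refine ⟨mul_mem (coordReflection_mem_orthogonalGroup i)
    (coordReflection_mem_orthogonalGroup j), ?_⟩
  rw [det_mul, det_coordReflection, det_coordReflection, neg_one_mul, neg_neg]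

lemma apply_conj_nonneg_of_isMaxOn {F : Matrix ι ι ℝ →ₗ[ℝ] ℝ} {R₀ R D : Matrix ι ι ℝ}
    (hR₀ : R₀ ∈ specialOrthogonalGroup ι ℝ)
    (hmax : IsMaxOn F (specialOrthogonalGroup ι ℝ) R₀)
    (hR : R ∈ specialOrthogonalGroup ι ℝ) (hD : 1 - 2 • D ∈ specialOrthogonalGroup ι ℝ) :
    0 ≤ F (R₀ * Rᵀ * D * R) := by
  have hRt := transpose_mem_specialOrthogonalGroup hR
  have hmem : R₀ * Rᵀ * (1 - 2 • D) * R ∈ specialOrthogonalGroup ι ℝ :=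
    mul_mem (mul_mem (mul_mem hR₀ hRt) hD) hR
  have hexpand : R₀ * Rᵀ * (1 - 2 • D) * R = R₀ - 2 • (R₀ * Rᵀ * D * R) := by
    rw [mul_sub, mul_one, sub_mul, mul_assoc R₀, (mem_orthogonalGroup_iff' _ _).1 hR.1, mul_one,
      mul_smul_comm, smul_mul_assoc]
  have hle : F (R₀ * Rᵀ * (1 - 2 • D) * R) ≤ F R₀ := hmax hmem
  rw [hexpand, map_sub, map_nsmul, two_nsmul] at hle
  linarith

end Matrix

lemma SO_eq_specialOrthogonalGroup (n : ℕ) : SO n = specialOrthogonalGroup (Fin n) ℝ := by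
  ext A
  rw [SetLike.mem_coe, mem_specialOrthogonalGroup_iff, mem_orthogonalGroup_iff']
  rfl

/-- If `R₀` maximizes `F` over `SO(n)`, then for every `R ∈ SO(n)` and every admissible
index `i`, `F(R₀ Rᵀ Dᵢ R) ≥ 0`, where `Dᵢ` has `1` at diagonal positions `2i` and `2i+1`
(0-based) and `0` elsewhere. -/
theorem F_of_conjugated_block_diag_nonneg (n : ℕ)
    (F : Matrix (Fin n) (Fin n) ℝ →ₗ[ℝ] ℝ)
    (R₀ : Matrix (Fin n) (Fin n) ℝ) (hR₀ : R₀ ∈ SO n)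
    (hmax : ∀ R ∈ SO n, F R ≤ F R₀) :
    ∀ R ∈ SO n, ∀ i : ℕ, ∀ h : 2 * i + 1 < n,
      0 ≤ F (R₀ * Rᵀ *
        (single (⟨2 * i, by omega⟩ : Fin n) (⟨2 * i, by omega⟩ : Fin n) (1 : ℝ)
          + single (⟨2 * i + 1, h⟩ : Fin n) (⟨2 * i + 1, h⟩ : Fin n) (1 : ℝ)) * R) := by
  simp only [SO_eq_specialOrthogonalGroup] at hR₀ hmax ⊢
  intro R hR i h
  refine apply_conj_nonneg_of_isMaxOn hR₀ hmax hR
    (one_sub_two_nsmul_single_add_single_mem_specialOrthogonalGroup ?_)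
  simp [Fin.ext_iff]
end
end

section
/- Let F be a linear functional on n×n real matrices maximized over SO(n) at R₀, and let W be skew-symmetric with F(R₀W²) = 0. Then R₀e^{tW} also maximizes F over SO(n), for every t ∈ ℝ. -/
/-!
Put `G A = F (R₀ * A)`, so that `G R ≤ G 1` on `SO n`. For skew `V` the curve `t ↦ exp (t • V)`
runs in `SO n` through `1`, and the first- and second-order conditions at `t = 0` give `G V = 0`
and `G (V * V) ≤ 0`. Thus `V ↦ -G (V * V)` is a positive semidefinite quadratic form on skew
matrices, and `W`, being isotropic, lies in its kernel: `G (W * V + V * W) = 0` for skew `V`.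
Odd powers of `W` are skew and `2 • W ^ (2j+2) = W * W ^ (2j+1) + W ^ (2j+1) * W`, so
`G (W ^ k) = 0` for all `k ≥ 1`; summing the exponential series, `G (exp (t • W)) = G 1`.
-/

open Matrix
noncomputable section

open NormedSpace Filter Topology Set

theorem IsLocalMax.second_deriv_nonpos {f f' : ℝ → ℝ} {a c : ℝ} (h : IsLocalMax f a)
    (hf : ∀ᶠ t in 𝓝 a, HasDerivAt f (f' t) t) (hf' : HasDerivAt f' c a) : c ≤ 0 := by
  by_contra! hc
  have hf'a : f' a = 0 := h.hasDerivAt_eq_zero hf.self_of_nhds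
  have hright : ∀ᶠ s in 𝓝[>] a, 0 < f' s ∧ HasDerivAt f (f' s) s := by
    filter_upwards [nhdsGT_le_nhdsNE a (hasDerivAt_iff_tendsto_slope.mp hf' |>.eventually
      (eventually_gt_nhds hc)), self_mem_nhdsWithin, nhdsWithin_le_nhds hf] with s hs has hfs
    exact ⟨pos_of_slope_pos has hs hf'a, hfs⟩
  obtain ⟨u, hau, hu⟩ := mem_nhdsGT_iff_exists_Ioo_subset.mp hright
  have hmax : ∀ᶠ s in 𝓝[>] a, f s ≤ f a := nhdsWithin_le_nhds h
  obtain ⟨t, hft, hat, htu⟩ := (hmax.and (Ioo_mem_nhdsGT hau)).exists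
  have hderiv : ∀ x ∈ Ioc a t, 0 < f' x ∧ HasDerivAt f (f' x) x :=
    fun x hx => hu ⟨hx.1, hx.2.trans_lt htu⟩
  have hcont : ContinuousOn f (Icc a t) := fun x hx => by
    rcases hx.1.eq_or_lt with rfl | hax
    · exact hf.self_of_nhds.continuousAt.continuousWithinAt
    · exact (hderiv x ⟨hax, hx.2⟩).2.continuousAt.continuousWithinAt
  obtain ⟨ξ, hξ, hξslope⟩ := exists_hasDerivAt_eq_slope f f' hat hcont
    fun x hx => (hderiv x (Ioo_subset_Ioc_self hx)).2
  have hξpos := (hderiv ξ (Ioo_subset_Ioc_self hξ)).1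
  rw [hξslope, lt_div_iff₀ (by linarith)] at hξpos
  linarith

theorem LinearMap.map_mul_add_mul_eq_zero {A : Type*} [Ring A] [Algebra ℝ A] (Φ : A →ₗ[ℝ] ℝ)
    {w v : A} (hw : Φ (w * w) = 0) (h : ∀ s : ℝ, Φ ((w + s • v) * (w + s • v)) ≤ 0) :
    Φ (w * v + v * w) = 0 := by
  have hexpand : ∀ s : ℝ,
      Φ ((w + s • v) * (w + s • v)) = s * Φ (w * v + v * w) + s ^ 2 * Φ (v * v) := by
    intro s
    have : (w + s • v) * (w + s • v) = w * w + s • (w * v + v * w) + s ^ 2 • (v * v) := by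
      simp only [add_mul, mul_add, smul_mul_assoc, mul_smul_comm, smul_smul, smul_add]
      module
    rw [this, map_add, map_add, hw, map_smul, map_smul, smul_eq_mul, smul_eq_mul, zero_add]
  have hmax : IsLocalMax (fun s : ℝ => s * Φ (w * v + v * w) + s ^ 2 * Φ (v * v)) 0 :=
    IsMaxOn.isLocalMax (s := univ) (fun s _ => by simpa [hexpand] using h s) univ_mem
  have hderiv := ((hasDerivAt_id (0 : ℝ)).mul_const (Φ (w * v + v * w))).add
    ((hasDerivAt_pow 2 (0 : ℝ)).mul_const (Φ (v * v)))
  simpa using hmax.hasDerivAt_eq_zero hderiv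

section NormedAlgebra

variable {𝔸 : Type*} [NormedRing 𝔸] [NormedAlgebra ℝ 𝔸] [CompleteSpace 𝔸]

theorem ContinuousLinearMap.map_exp_eq_map_one {E : Type*} [AddCommGroup E] [Module ℝ E]
    [TopologicalSpace E] [T2Space E] (Φ : 𝔸 →L[ℝ] E) {x : 𝔸}
    (hx : ∀ k, 0 < k → Φ (x ^ k) = 0) :
    Φ (exp x) = Φ 1 := by
  rw [exp_eq_tsum ℝ, Φ.map_tsum (expSeries_summable' x), tsum_eq_single 0]
  · simp
  · intro k hk
    rw [map_smul, hx k (Nat.pos_of_ne_zero hk), smul_zero]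

variable (Φ : 𝔸 →L[ℝ] ℝ) (x : 𝔸)

theorem ContinuousLinearMap.map_eq_zero_of_isLocalMax_exp_smul
    (h : IsLocalMax (fun t : ℝ => Φ (exp (t • x))) 0) : Φ x = 0 := by
  simpa using h.hasDerivAt_eq_zero
    (Φ.hasFDerivAt.comp_hasDerivAt (0 : ℝ) (hasDerivAt_exp_smul_const x 0))

theorem ContinuousLinearMap.map_mul_self_nonpos_of_isLocalMax_exp_smul
    (h : IsLocalMax (fun t : ℝ => Φ (exp (t • x))) 0) : Φ (x * x) ≤ 0 := by
  have hderiv2 := Φ.hasFDerivAt.comp_hasDerivAt (0 : ℝ)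
    ((hasDerivAt_exp_smul_const x (0 : ℝ)).mul_const x)
  simpa using h.second_deriv_nonpos (Eventually.of_forall
    fun t => Φ.hasFDerivAt.comp_hasDerivAt t (hasDerivAt_exp_smul_const x t)) hderiv2

end NormedAlgebra

section SpecialOrthogonal

variable {n : ℕ}

theorem mul_mem_SO {R S : Matrix (Fin n) (Fin n) ℝ} (hR : R ∈ SO n) (hS : S ∈ SO n) :
    R * S ∈ SO n := by
  refine ⟨?_, by rw [det_mul, hR.2, hS.2, one_mul]⟩
  rw [transpose_mul, Matrix.mul_assoc, ← Matrix.mul_assoc Rᵀ, hR.1, Matrix.one_mul, hS.1]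

theorem exp_mem_SO {W : Matrix (Fin n) (Fin n) ℝ} (hW : Wᵀ = -W) : exp W ∈ SO n := by
  have horth : (exp W)ᵀ * exp W = 1 := by
    rw [← Matrix.exp_transpose, hW, ← Matrix.exp_add_of_commute _ _ (Commute.refl W).neg_left,
      neg_add_cancel, exp_zero]
  refine ⟨horth, ?_⟩
  have hsq : (exp W).det ^ 2 = 1 := by
    simpa [sq] using congrArg det horth
  have hnonneg : 0 ≤ (exp W).det := by
    have hhalf : exp W = exp ((1 / 2 : ℝ) • W) * exp ((1 / 2 : ℝ) • W) := by
      rw [← Matrix.exp_add_of_commute _ _ (Commute.refl _), ← add_smul]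
      norm_num
    rw [hhalf, det_mul]
    exact mul_self_nonneg _
  nlinarith

theorem transpose_pow_eq_neg_of_odd {W : Matrix (Fin n) (Fin n) ℝ} (hW : Wᵀ = -W) {k : ℕ}
    (hk : Odd k) : (W ^ k)ᵀ = -W ^ k := by
  rw [transpose_pow, hW, hk.neg_pow]

end SpecialOrthogonal

section Maximizer

-- Any submultiplicative norm would do: it is needed only to differentiate `exp`.
attribute [local instance] Matrix.linftyOpNormedRing Matrix.linftyOpNormedAlgebra

variable {n : ℕ} (G : Matrix (Fin n) (Fin n) ℝ →ₗ[ℝ] ℝ)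

theorem isLocalMax_map_exp_smul (hG : ∀ R ∈ SO n, G R ≤ G 1) {V : Matrix (Fin n) (Fin n) ℝ}
    (hV : Vᵀ = -V) :
    IsLocalMax (fun t : ℝ => G.toContinuousLinearMap (exp (t • V))) 0 := by
  refine IsMaxOn.isLocalMax (s := univ) (fun t _ => ?_) univ_mem
  simpa using hG _ (exp_mem_SO (by rw [transpose_smul, hV, smul_neg]))

theorem map_pow_eq_zero_of_map_mul_self_eq_zero (hG : ∀ R ∈ SO n, G R ≤ G 1)
    {W : Matrix (Fin n) (Fin n) ℝ} (hW : Wᵀ = -W) (hGW : G (W * W) = 0) {k : ℕ} (hk : 0 < k) :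
    G (W ^ k) = 0 := by
  have hskew : ∀ {V : Matrix (Fin n) (Fin n) ℝ}, Vᵀ = -V → G V = 0 := fun hV =>
    G.toContinuousLinearMap.map_eq_zero_of_isLocalMax_exp_smul _
      (isLocalMax_map_exp_smul G hG hV)
  have hpolar : ∀ {V : Matrix (Fin n) (Fin n) ℝ}, Vᵀ = -V → G (W * V + V * W) = 0 :=
    fun hV => G.map_mul_add_mul_eq_zero hGW fun s =>
      G.toContinuousLinearMap.map_mul_self_nonpos_of_isLocalMax_exp_smul _
        (isLocalMax_map_exp_smul G hG (by simp [transpose_add, transpose_smul, hW, hV, add_comm]))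
  obtain ⟨m, rfl | rfl⟩ := k.even_or_odd'
  · obtain ⟨j, rfl⟩ := Nat.exists_eq_add_one_of_ne_zero (by omega : m ≠ 0)
    have hsplit : (2 : ℝ) • W ^ (2 * (j + 1)) = W * W ^ (2 * j + 1) + W ^ (2 * j + 1) * W := by
      rw [← pow_succ', ← pow_succ, two_smul, mul_add_one]
    have := congrArg G hsplit
    rwa [map_smul, hpolar (transpose_pow_eq_neg_of_odd hW (odd_two_mul_add_one j)),
      smul_eq_zero, or_iff_right two_ne_zero] at this
  · exact hskew (transpose_pow_eq_neg_of_odd hW (odd_two_mul_add_one m))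

theorem map_exp_smul_eq_map_one (hG : ∀ R ∈ SO n, G R ≤ G 1) {W : Matrix (Fin n) (Fin n) ℝ}
    (hW : Wᵀ = -W) (hGW : G (W * W) = 0) (t : ℝ) : G (exp (t • W)) = G 1 :=
  G.toContinuousLinearMap.map_exp_eq_map_one fun k hk => show G ((t • W) ^ k) = 0 by
    rw [smul_pow, map_smul, map_pow_eq_zero_of_map_mul_self_eq_zero G hG hW hGW hk, smul_zero]

end Maximizer

/-- If `R₀` maximizes `F` over `SO(n)` and `W` is skew-symmetric with `F(R₀W²) = 0`,
then `R₀ e^{tW}` also maximizes `F` over `SO(n)` for every `t ∈ ℝ`. -/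
theorem geodesic_of_maximizers (n : ℕ)
    (F : Matrix (Fin n) (Fin n) ℝ →ₗ[ℝ] ℝ)
    (R₀ : Matrix (Fin n) (Fin n) ℝ) (hR₀ : R₀ ∈ SO n)
    (hmax : ∀ R ∈ SO n, F R ≤ F R₀)
    (W : Matrix (Fin n) (Fin n) ℝ) (hW : Wᵀ = -W)
    (hFW : F (R₀ * (W * W)) = 0) :
    ∀ t : ℝ, R₀ * NormedSpace.exp (t • W) ∈ SO n ∧
      ∀ R ∈ SO n, F R ≤ F (R₀ * NormedSpace.exp (t • W)) := by
  set G := F ∘ₗ LinearMap.mulLeft ℝ R₀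
  have hG : ∀ R ∈ SO n, G R ≤ G 1 := fun R hR => by
    simpa [G] using hmax _ (mul_mem_SO hR₀ hR)
  intro t
  have hconst : F (R₀ * exp (t • W)) = F R₀ := by
    simpa [G] using map_exp_smul_eq_map_one G hG hW hFW t
  exact ⟨mul_mem_SO hR₀ (exp_mem_SO (by rw [transpose_smul, hW, smul_neg])),
    fun R hR => (hmax R hR).trans hconst.ge⟩
end
end

section
/- Let F be a linear functional on n×n real matrices with I ∈ argmax_{SO(n)} F. Then 𝓡 = argmax_{SO(n)} F equals {I} if and only if F(W²) < 0 for every nonzero skew-symmetric matrix W. -/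
open Matrix
noncomputable section

def optRot (n : ℕ) (F : Matrix (Fin n) (Fin n) ℝ →ₗ[ℝ] ℝ) :
    Set (Matrix (Fin n) (Fin n) ℝ) :=
  {R | R ∈ SO n ∧ ∀ Q ∈ SO n, F Q ≤ F R}

/-!
At the maximizer `1`, comparing `F` with its values along the Cayley curves `t ↦ cayley (t • V)`
shows that `F` vanishes on skew matrices and that `V ↦ F (V * V)` is negative semidefinite on them.

If `F (W * W) = 0` for a skew `W ≠ 0`, then `W` lies in the kernel of this form:
`F (W * Z + Z * W) = 0` for every skew `Z`. For `C = cayley W` one has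
`C + Cᵀ - 2 = W * (C - Cᵀ)` with `C - Cᵀ` skew and commuting with `W`, so `F C = F 1` and
`C ≠ 1` is a second maximizer.

Conversely, every `R ∈ SO(n)` satisfies `R + Rᵀ - 2 = W * W` for some skew `W`: diagonalize
`R + Rᵀ`; away from the `-1`-eigenspace of `R` take `W = (R - Rᵀ) (R + Rᵀ + 2)^(-1/2)`, and on
that eigenspace, whose dimension is even because `det R = 1`, add twice a complex structure.
A second maximizer `R` then gives `F (W * W) = 2 (F R - F 1) = 0`.
-/

open Filter Topology

theorem eq_zero_of_transpose_mul_self_eq_zero {ι : Type*} [Fintype ι] {A : Matrix ι ι ℝ}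
    (h : Aᵀ * A = 0) : A = 0 := by
  rw [← conjTranspose_eq_transpose_of_trivial] at h
  exact conjTranspose_mul_self_eq_zero.mp h

section Cayley

variable {ι : Type*} [Fintype ι] [DecidableEq ι] {V : Matrix ι ι ℝ}

theorem isUnit_det_one_sub_of_transpose_eq_neg (hV : Vᵀ = -V) : IsUnit (1 - V).det := by
  have hpd : (1 - V)ᵀ * (1 - V) = 1 + Vᴴ * V := by
    rw [conjTranspose_eq_transpose_of_trivial, transpose_sub, transpose_one, hV]
    noncomm_ring
  have hdet : 0 < ((1 - V)ᵀ * (1 - V)).det := by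
    rw [hpd]
    exact (PosDef.one.add_posSemidef (posSemidef_conjTranspose_mul_self V)).det_pos
  rw [det_mul, det_transpose] at hdet
  exact isUnit_iff_ne_zero.mpr fun h => by simp [h] at hdet

def cayley (V : Matrix ι ι ℝ) : Matrix ι ι ℝ := (1 + V) * (1 - V)⁻¹

theorem cayley_mul_one_sub (hV : Vᵀ = -V) : cayley V * (1 - V) = 1 + V := by
  rw [cayley, Matrix.mul_assoc, nonsing_inv_mul _ (isUnit_det_one_sub_of_transpose_eq_neg hV),
    Matrix.mul_one]

theorem one_sub_mul_cayley (hV : Vᵀ = -V) : (1 - V) * cayley V = 1 + V := by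
  have hcomm : (1 - V) * (1 + V) = (1 + V) * (1 - V) := by noncomm_ring
  rw [cayley, ← Matrix.mul_assoc, hcomm, Matrix.mul_assoc,
    mul_nonsing_inv _ (isUnit_det_one_sub_of_transpose_eq_neg hV), Matrix.mul_one]

theorem cayley_sub_one (hV : Vᵀ = -V) : cayley V - 1 = V * (cayley V + 1) := by
  have h := one_sub_mul_cayley hV
  rw [← sub_eq_zero] at h ⊢
  rw [← h]
  noncomm_ring

theorem cayley_sub_one' (hV : Vᵀ = -V) : cayley V - 1 = (cayley V + 1) * V := by
  have h := cayley_mul_one_sub hV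
  rw [← sub_eq_zero] at h ⊢
  rw [← h]
  noncomm_ring

theorem commute_cayley (hV : Vᵀ = -V) : Commute V (cayley V) := by
  have h := (cayley_sub_one hV).symm.trans (cayley_sub_one' hV)
  rw [Matrix.mul_add, Matrix.add_mul, Matrix.mul_one, Matrix.one_mul] at h
  exact add_right_cancel h

theorem cayley_eq_one_iff (hV : Vᵀ = -V) : cayley V = 1 ↔ V = 0 := by
  refine ⟨fun h => ?_, by rintro rfl; simp [cayley]⟩
  have h2 := cayley_sub_one hV
  rw [h, sub_self, Matrix.mul_add, Matrix.mul_one, ← two_smul ℝ] at h2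
  exact (smul_eq_zero.mp h2.symm).resolve_left two_ne_zero

theorem transpose_cayley_mul_cayley (hV : Vᵀ = -V) : (cayley V)ᵀ * cayley V = 1 := by
  have hadd : IsUnit (1 + V).det := by
    simpa using isUnit_det_one_sub_of_transpose_eq_neg (V := -V) (by rw [transpose_neg, hV])
  have ht : (cayley V)ᵀ = (1 + V)⁻¹ * (1 - V) := by
    rw [cayley, transpose_mul, transpose_nonsing_inv, transpose_sub, transpose_add, hV,
      transpose_one, sub_neg_eq_add, ← sub_eq_add_neg]
  calc (cayley V)ᵀ * cayley V = (1 + V)⁻¹ * ((1 - V) * (1 + V)) * (1 - V)⁻¹ := by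
        rw [ht, cayley]; noncomm_ring
    _ = (1 + V)⁻¹ * (1 + V) * ((1 - V) * (1 - V)⁻¹) := by
        rw [show (1 - V) * (1 + V) = (1 + V) * (1 - V) by noncomm_ring]; noncomm_ring
    _ = 1 := by
        rw [nonsing_inv_mul _ hadd, mul_nonsing_inv _ (isUnit_det_one_sub_of_transpose_eq_neg hV),
          Matrix.one_mul]

theorem det_cayley (hV : Vᵀ = -V) : (cayley V).det = 1 := by
  have h : (1 + V).det = (1 - V).det := by
    rw [← det_transpose, transpose_add, transpose_one, hV, sub_eq_add_neg]
  rw [cayley, det_mul, det_nonsing_inv, Ring.inverse_eq_inv', h, mul_inv_cancel₀]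
  exact (isUnit_det_one_sub_of_transpose_eq_neg hV).ne_zero

theorem cayley_add_transpose_sub_two (hV : Vᵀ = -V) :
    cayley V + (cayley V)ᵀ - 2 = V * (cayley V - (cayley V)ᵀ) := by
  have h := congrArg transpose (cayley_sub_one' hV)
  rw [transpose_sub, transpose_one, transpose_mul, hV, transpose_add, transpose_one] at h
  calc cayley V + (cayley V)ᵀ - 2 = (cayley V - 1) + ((cayley V)ᵀ - 1) := by
        rw [sub_add_sub_comm, one_add_one_eq_two]
    _ = V * (cayley V + 1) + -V * ((cayley V)ᵀ + 1) := by rw [cayley_sub_one hV, h]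
    _ = V * (cayley V - (cayley V)ᵀ) := by noncomm_ring

theorem tendsto_cayley_smul (V : Matrix ι ι ℝ) :
    Tendsto (fun t : ℝ => cayley (t • V)) (𝓝 0) (𝓝 1) := by
  have hinv : ContinuousAt (fun t : ℝ => (1 - t • V)⁻¹) 0 := by
    refine ContinuousAt.comp (g := Inv.inv) ?_ (by fun_prop)
    refine continuousAt_matrix_inv _ ?_
    rw [zero_smul, sub_zero, det_one, Ring.inverse_eq_inv']
    exact continuousAt_inv₀ one_ne_zero
  have hadd : Continuous (fun t : ℝ => 1 + t • V) := by fun_prop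
  simpa [cayley] using hadd.continuousAt.tendsto.mul hinv.tendsto

end Cayley

section Optimality

variable {n : ℕ} {F : Matrix (Fin n) (Fin n) ℝ →ₗ[ℝ] ℝ} {V W : Matrix (Fin n) (Fin n) ℝ}

theorem cayley_mem_SO (hV : Vᵀ = -V) : cayley V ∈ SO n :=
  ⟨transpose_cayley_mul_cayley hV, det_cayley hV⟩

theorem map_mul_cayley_add_one_nonpos (hI : 1 ∈ optRot n F) (hV : Vᵀ = -V) :
    F (V * (cayley V + 1)) ≤ 0 := by
  rw [← cayley_sub_one hV, map_sub]
  exact sub_nonpos.mpr (hI.2 _ (cayley_mem_SO hV))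

theorem map_nonpos_of_map_mul_cayley_smul_add_one_nonpos (X : Matrix (Fin n) (Fin n) ℝ)
    (h : ∀ t : ℝ, 0 < t → F (X * (cayley (t • V) + 1)) ≤ 0) : F X ≤ 0 := by
  have hlim : Tendsto (fun t : ℝ => F (X * (cayley (t • V) + 1))) (𝓝[>] 0)
      (𝓝 (F (X * (1 + 1)))) :=
    ((F.continuous_of_finiteDimensional.tendsto _).comp
      (((tendsto_cayley_smul V).add_const 1).const_mul X)).mono_left nhdsWithin_le_nhds
  have h2 := le_of_tendsto hlim (eventually_nhdsWithin_of_forall h)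
  rw [Matrix.mul_add, Matrix.mul_one, map_add] at h2
  linarith

theorem map_eq_zero_of_transpose_eq_neg (hI : 1 ∈ optRot n F) (hV : Vᵀ = -V) : F V = 0 := by
  have key : ∀ {V : Matrix (Fin n) (Fin n) ℝ}, Vᵀ = -V → F V ≤ 0 := fun {V} hV =>
    map_nonpos_of_map_mul_cayley_smul_add_one_nonpos V fun t ht => by
      have h := map_mul_cayley_add_one_nonpos hI (V := t • V) (by rw [transpose_smul, hV, smul_neg])
      rw [smul_mul_assoc, map_smul, smul_eq_mul] at h
      exact nonpos_of_mul_nonpos_right h ht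
  have h := key (V := -V) (by rw [transpose_neg, hV])
  rw [map_neg] at h
  linarith [key hV]

theorem map_transpose (hI : 1 ∈ optRot n F) (X : Matrix (Fin n) (Fin n) ℝ) : F Xᵀ = F X := by
  have h := map_eq_zero_of_transpose_eq_neg hI (V := X - Xᵀ)
    (by rw [transpose_sub, transpose_transpose, neg_sub])
  rw [map_sub] at h
  linarith

theorem map_mul_self_nonpos (hI : 1 ∈ optRot n F) (hV : Vᵀ = -V) : F (V * V) ≤ 0 := by
  refine map_nonpos_of_map_mul_cayley_smul_add_one_nonpos (V := V) _ fun t ht => ?_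
  have htV : (t • V)ᵀ = -(t • V) := by rw [transpose_smul, hV, smul_neg]
  have h := map_mul_cayley_add_one_nonpos hI htV
  have e : (t • V) * (cayley (t • V) + 1)
      = (t • V) * (cayley (t • V) - 1) + (t • V + t • V) := by noncomm_ring
  rw [e, cayley_sub_one htV, map_add, map_add, map_eq_zero_of_transpose_eq_neg hI htV,
    add_zero, add_zero] at h
  simp only [smul_mul_assoc, Matrix.mul_smul, map_smul, smul_eq_mul, ← mul_assoc] at h
  exact nonpos_of_mul_nonpos_right h (mul_pos ht ht)

theorem map_mul_add_mul_eq_zero (hI : 1 ∈ optRot n F) (hW : Wᵀ = -W) (hW0 : F (W * W) = 0)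
    {Z : Matrix (Fin n) (Fin n) ℝ} (hZ : Zᵀ = -Z) : F (W * Z + Z * W) = 0 := by
  have h : ∀ x : ℝ, 0 ≤ -F (Z * Z) * (x * x) + -F (W * Z + Z * W) * x + 0 := by
    intro x
    have h := map_mul_self_nonpos hI (V := W + x • Z) (by
      rw [transpose_add, transpose_smul, hW, hZ, smul_neg, neg_add])
    have e : (W + x • Z) * (W + x • Z) = W * W + x • (W * Z + Z * W) + (x * x) • (Z * Z) := by
      simp only [Matrix.add_mul, Matrix.mul_add, smul_mul_assoc, mul_smul_comm, smul_smul, smul_add]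
      abel
    rw [e, map_add, map_add, map_smul, map_smul, hW0, smul_eq_mul, smul_eq_mul] at h
    linarith
  have h2 := discrim_le_zero h
  rw [discrim, mul_zero, sub_zero, neg_sq] at h2
  exact pow_eq_zero_iff two_ne_zero |>.mp (le_antisymm h2 (sq_nonneg _))

theorem cayley_mem_optRot (hI : 1 ∈ optRot n F) (hW : Wᵀ = -W) (hW0 : F (W * W) = 0) :
    cayley W ∈ optRot n F := by
  set C := cayley W
  have hZ : (C - Cᵀ)ᵀ = -(C - Cᵀ) := by rw [transpose_sub, transpose_transpose, neg_sub]
  have hWC : W * C = C * W := commute_cayley hW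
  have hWCt : W * Cᵀ = Cᵀ * W := by
    simpa [transpose_mul, hW] using (congrArg transpose hWC).symm
  have hWZ : F (W * (C - Cᵀ)) = 0 := by
    have h := map_mul_add_mul_eq_zero hI hW hW0 hZ
    rwa [Matrix.sub_mul, ← hWC, ← hWCt, ← Matrix.mul_sub, ← two_smul ℝ, map_smul,
      smul_eq_zero, or_iff_right two_ne_zero] at h
  have hFC : F C = F 1 := by
    have h := congrArg F (cayley_add_transpose_sub_two hW)
    rw [hWZ, map_sub, map_add, map_transpose hI, ← one_add_one_eq_two, map_add] at h
    linarith
  exact ⟨cayley_mem_SO hW, fun Q hQ => hFC ▸ hI.2 Q hQ⟩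

end Optimality

theorem mul_self_sub_four_mul_inv_sqrt_add_two_sq {x : ℝ} (hx : -2 ≤ x) :
    (x * x - 4) * ((√(x + 2))⁻¹ * (√(x + 2))⁻¹) = x - 2 + 4 * if x = -2 then 1 else 0 := by
  by_cases hx2 : x = -2
  · norm_num [hx2]
  · have hpos : 0 < x + 2 := by linarith [lt_of_le_of_ne hx (Ne.symm hx2)]
    rw [if_neg hx2, mul_zero, add_zero, ← mul_inv, Real.mul_self_sqrt hpos.le]
    field_simp
    ring

section SkewSquareRoot

variable {ι : Type*} [Fintype ι] [DecidableEq ι] {R : Matrix ι ι ℝ} {d : ι → ℝ}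

/- Below, `R + Rᵀ = diagonal d` for an orthogonal `R`, so `d i = -2` exactly on the coordinates
spanning the `-1`-eigenspace of `R`. -/

theorem commute_diagonal_comp {K : Matrix ι ι ℝ} (h : Commute K (diagonal d))
    (f : ℝ → ℝ) : Commute K (diagonal (f ∘ d)) := by
  show K * _ = _ * K
  ext i j
  have hij := congrFun (congrFun h.eq i) j
  rw [mul_diagonal, diagonal_mul] at hij ⊢
  by_cases hK : K i j = 0
  · simp [hK]
  · rw [mul_comm (d i)] at hij
    simp [mul_left_cancel₀ hK hij, mul_comm]

theorem exists_transpose_eq_neg_mul_self_eq_neg_diagonal (p : ι → Prop) [DecidablePred p]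
    (hp : Even (Fintype.card {i // p i})) :
    ∃ A : Matrix ι ι ℝ, Aᵀ = -A ∧ A * A = -diagonal (fun i => if p i then 1 else 0) ∧
      diagonal (fun i => if p i then 1 else 0) * A = A := by
  obtain ⟨k, hk⟩ := hp
  -- `A` is the standard complex structure `J` on the coordinates satisfying `p`, paired up by `e`.
  let e : ι ≃ (Fin k ⊕ Fin k) ⊕ {i // ¬p i} := (Equiv.sumCompl p).symm.trans
    (Equiv.sumCongr ((Fintype.equivFinOfCardEq hk).trans finSumFinEquiv.symm) (Equiv.refl _))
  let J : Matrix (Fin k ⊕ Fin k) (Fin k ⊕ Fin k) ℝ := fromBlocks 0 (-1) 1 0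
  let A₀ : Matrix ((Fin k ⊕ Fin k) ⊕ {i // ¬p i}) ((Fin k ⊕ Fin k) ⊕ {i // ¬p i}) ℝ :=
    fromBlocks J 0 0 0
  let E : Matrix ((Fin k ⊕ Fin k) ⊕ {i // ¬p i}) ((Fin k ⊕ Fin k) ⊕ {i // ¬p i}) ℝ :=
    fromBlocks 1 0 0 0
  have hE : E.submatrix e e = diagonal (fun i => if p i then 1 else 0) := by
    rw [show E = diagonal (Sum.elim 1 0) by simp [E, ← fromBlocks_diagonal],
      submatrix_diagonal_equiv]
    congr 1
    ext i
    by_cases hi : p i <;> simp [e, hi, Equiv.sumCompl_symm_apply_of_pos,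
      Equiv.sumCompl_symm_apply_of_neg]
  refine ⟨A₀.submatrix e e, ?_, ?_, ?_⟩
  · rw [transpose_submatrix]
    change _ = (-A₀).submatrix e e
    congr 1
    simp [A₀, J, fromBlocks_transpose, fromBlocks_neg]
  · rw [submatrix_mul_equiv, ← hE]
    change _ = (-E).submatrix e e
    congr 1
    simp [A₀, J, E, fromBlocks_multiply, fromBlocks_neg, ← fromBlocks_one]
  · rw [← hE, submatrix_mul_equiv]
    congr 1
    simp [A₀, J, E, fromBlocks_multiply]

theorem commute_sub_transpose_add_transpose (hR : Rᵀ * R = 1) : Commute (R - Rᵀ) (R + Rᵀ) := by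
  rw [commute_iff_eq, ← sub_eq_zero]
  calc (R - Rᵀ) * (R + Rᵀ) - (R + Rᵀ) * (R - Rᵀ) = 2 * (R * Rᵀ - Rᵀ * R) := by noncomm_ring
    _ = 0 := by rw [hR, mul_eq_one_comm.mp hR, sub_self, mul_zero]

theorem sub_transpose_mul_self (hR : Rᵀ * R = 1) :
    (R - Rᵀ) * (R - Rᵀ) = (R + Rᵀ) * (R + Rᵀ) - 4 := by
  rw [← sub_eq_zero, show (4 : Matrix ι ι ℝ) = 2 * 1 + 2 * 1 by norm_num]
  calc (R - Rᵀ) * (R - Rᵀ) - ((R + Rᵀ) * (R + Rᵀ) - (2 * 1 + 2 * 1))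
      = 2 * (1 - R * Rᵀ) + 2 * (1 - Rᵀ * R) := by noncomm_ring
    _ = 0 := by rw [hR, mul_eq_one_comm.mp hR, sub_self, mul_zero, add_zero]

theorem transpose_add_one_mul_add_one (hR : Rᵀ * R = 1) (hd : R + Rᵀ = diagonal d) :
    (R + 1)ᵀ * (R + 1) = diagonal fun i => d i + 2 := by
  rw [← diagonal_add, diagonal_ofNat, ← hd, transpose_add, transpose_one]
  calc (Rᵀ + 1) * (R + 1) = Rᵀ * R + (R + Rᵀ) + 1 := by noncomm_ring
    _ = R + Rᵀ + 2 := by rw [hR, ← one_add_one_eq_two]; abel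

theorem neg_two_le_of_add_transpose_eq_diagonal (hR : Rᵀ * R = 1) (hd : R + Rᵀ = diagonal d)
    (i : ι) : -2 ≤ d i := by
  have h := congrFun (congrFun (transpose_add_one_mul_add_one hR hd) i) i
  rw [diagonal_apply_eq, mul_apply] at h
  have : 0 ≤ ∑ k, (R + 1)ᵀ i k * (R + 1) k i := by
    simp only [transpose_apply]
    exact Finset.sum_nonneg fun k _ => mul_self_nonneg _
  linarith

theorem det_eq_one_of_add_transpose_eq_diagonal (hR : Rᵀ * R = 1) (hd : R + Rᵀ = diagonal d)
    (hd2 : ∀ i, -2 < d i) : R.det = 1 := by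
  have hpos : 0 < ((R + 1)ᵀ * (R + 1)).det := by
    rw [transpose_add_one_mul_add_one hR hd, det_diagonal]
    exact Finset.prod_pos fun i _ => by linarith [hd2 i]
  rw [det_mul, det_transpose] at hpos
  have e : R * (R + 1)ᵀ = R + 1 := by
    rw [transpose_add, transpose_one, Matrix.mul_add, mul_eq_one_comm.mp hR, Matrix.mul_one,
      add_comm]
  have := congrArg det e
  rwa [det_mul, det_transpose, mul_eq_right₀ fun h0 => by simp [h0] at hpos] at this

theorem mul_diagonal_indicator_eq_neg (hR : Rᵀ * R = 1) (hd : R + Rᵀ = diagonal d) :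
    R * diagonal (fun i => if d i = -2 then 1 else 0)
      = -diagonal (fun i => if d i = -2 then 1 else 0) := by
  set P : Matrix ι ι ℝ := diagonal fun i => if d i = -2 then 1 else 0
  have h : ((R + 1) * P)ᵀ * ((R + 1) * P) = 0 := by
    rw [transpose_mul, diagonal_transpose, Matrix.mul_assoc, ← Matrix.mul_assoc (R + 1)ᵀ,
      transpose_add_one_mul_add_one hR hd, diagonal_mul_diagonal, diagonal_mul_diagonal,
      ← diagonal_zero]
    congr 1
    ext i
    split_ifs with hi <;> simp [hi]
  have h0 := eq_zero_of_transpose_mul_self_eq_zero h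
  rwa [Matrix.add_mul, Matrix.one_mul, add_eq_zero_iff_eq_neg] at h0

/-- Adding twice the projection onto its `-1`-eigenspace turns `R` into a rotation without
eigenvalue `-1`. -/
theorem det_add_two_smul_diagonal_indicator (hR : Rᵀ * R = 1) (hd : R + Rᵀ = diagonal d) :
    (R + (2 : ℝ) • diagonal (fun i => if d i = -2 then 1 else 0)).det = 1 := by
  set P : Matrix ι ι ℝ := diagonal fun i => if d i = -2 then 1 else 0
  have hPt : Pᵀ = P := diagonal_transpose _
  have hRP : R * P = -P := mul_diagonal_indicator_eq_neg hR hd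
  have hRtP : Rᵀ * P = -P := by
    rw [← neg_eq_iff_eq_neg, ← Matrix.mul_neg, ← hRP, ← Matrix.mul_assoc, hR, Matrix.one_mul]
  have hPR : P * R = -P := by
    simpa [transpose_mul, hPt] using congrArg transpose hRtP
  have hPP : P * P = P := by
    rw [diagonal_mul_diagonal]
    congr 1
    ext i
    split_ifs <;> simp
  refine det_eq_one_of_add_transpose_eq_diagonal (d := fun i => d i + 4 * if d i = -2 then 1 else 0)
    ?_ ?_ fun i => ?_
  · rw [transpose_add, transpose_smul, hPt]
    simp only [Matrix.add_mul, Matrix.mul_add, smul_mul_assoc, mul_smul_comm, hR, hRtP, hPR, hPP]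
    module
  · rw [transpose_add, transpose_smul, hPt, add_add_add_comm, hd, ← add_smul, ← diagonal_smul,
      diagonal_add]
    norm_num
  · have := neg_two_le_of_add_transpose_eq_diagonal hR hd i
    split_ifs with hi
    · linarith
    · rw [mul_zero, add_zero]
      exact lt_of_le_of_ne this (Ne.symm hi)

theorem even_card_eq_neg_two (hR : Rᵀ * R = 1) (hdet : R.det = 1) (hd : R + Rᵀ = diagonal d) :
    Even (Fintype.card {i // d i = -2}) := by
  set P : Matrix ι ι ℝ := diagonal fun i => if d i = -2 then 1 else 0
  have hT : R + (2 : ℝ) • P = R * diagonal fun i => if d i = -2 then -1 else 1 := by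
    have : (diagonal fun i => if d i = -2 then -1 else 1) = 1 - (2 : ℝ) • P := by
      rw [← diagonal_one, ← diagonal_smul, diagonal_sub]
      congr 1
      ext i
      by_cases hi : d i = -2 <;> norm_num [hi]
    rw [this, Matrix.mul_sub, Matrix.mul_one, Matrix.mul_smul, mul_diagonal_indicator_eq_neg hR hd,
      smul_neg, sub_neg_eq_add]
  have h := det_add_two_smul_diagonal_indicator hR hd
  rw [hT, det_mul, hdet, one_mul, det_diagonal, Finset.prod_ite, Finset.prod_const,
    Finset.prod_const, one_pow, mul_one, ← Fintype.card_subtype] at h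
  exact (neg_one_pow_eq_one_iff_even (by norm_num)).mp h

theorem mul_diagonal_inv_sqrt_mul_self {K : Matrix ι ι ℝ} (hK : Commute K (diagonal d))
    (hKK : K * K = diagonal d * diagonal d - 4) (hd2 : ∀ i, -2 ≤ d i) :
    (K * diagonal fun i => (√(d i + 2))⁻¹) * (K * diagonal fun i => (√(d i + 2))⁻¹)
      = diagonal d - 2 + (4 : ℝ) • diagonal (fun i => if d i = -2 then 1 else 0) := by
  set G : Matrix ι ι ℝ := diagonal fun i => (√(d i + 2))⁻¹
  have hKG : K * G = G * K := (commute_diagonal_comp hK fun x => (√(x + 2))⁻¹).eq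
  calc (K * G) * (K * G) = (K * K) * (G * G) := by
        rw [Matrix.mul_assoc, ← Matrix.mul_assoc G, ← hKG]
        simp only [Matrix.mul_assoc]
    _ = _ := by
        rw [hKK, diagonal_mul_diagonal, ← diagonal_ofNat, diagonal_sub, diagonal_mul_diagonal,
          ← diagonal_ofNat, diagonal_sub, ← diagonal_smul, diagonal_add, diagonal_mul_diagonal]
        congr 1
        ext i
        exact mul_self_sub_four_mul_inv_sqrt_add_two_sq (hd2 i)

theorem exists_transpose_eq_neg_mul_self_eq_diagonal_sub_two (hR : Rᵀ * R = 1) (hdet : R.det = 1)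
    (hd : R + Rᵀ = diagonal d) : ∃ W : Matrix ι ι ℝ, Wᵀ = -W ∧ W * W = diagonal d - 2 := by
  obtain ⟨A, hAt, hAA, hPA⟩ := exists_transpose_eq_neg_mul_self_eq_neg_diagonal
    (fun i => d i = -2) (even_card_eq_neg_two hR hdet hd)
  have hKd : Commute (R - Rᵀ) (diagonal d) := hd ▸ commute_sub_transpose_add_transpose hR
  have hKK : (R - Rᵀ) * (R - Rᵀ) = diagonal d * diagonal d - 4 :=
    hd ▸ sub_transpose_mul_self hR
  set P : Matrix ι ι ℝ := diagonal fun i => if d i = -2 then 1 else 0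
  set K := R - Rᵀ
  -- `(√0)⁻¹ = 0`: `G` vanishes on the `-1`-eigenspace of `R`.
  set G : Matrix ι ι ℝ := diagonal fun i => (√(d i + 2))⁻¹
  have hKt : Kᵀ = -K := by rw [transpose_sub, transpose_transpose, neg_sub]
  have hKG : K * G = G * K := (commute_diagonal_comp hKd fun x => (√(x + 2))⁻¹).eq
  have hGP : G * P = 0 := by
    rw [diagonal_mul_diagonal, ← diagonal_zero]
    congr 1
    ext i
    split_ifs with hi <;> simp [hi]
  have hKGt : (K * G)ᵀ = -(K * G) := by
    rw [transpose_mul, diagonal_transpose, hKt, Matrix.mul_neg, ← hKG]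
  have hKGA : K * G * A = 0 := by
    rw [← hPA, Matrix.mul_assoc K, ← Matrix.mul_assoc G, hGP, Matrix.zero_mul, Matrix.mul_zero]
  have hAKG : A * (K * G) = 0 := by
    simpa [transpose_mul, hKGt, hAt] using congrArg transpose hKGA
  have hKGsq : (K * G) * (K * G) = diagonal d - 2 + (4 : ℝ) • P :=
    mul_diagonal_inv_sqrt_mul_self hKd hKK (neg_two_le_of_add_transpose_eq_diagonal hR hd)
  refine ⟨K * G + (2 : ℝ) • A, ?_, ?_⟩
  · rw [transpose_add, transpose_smul, hKGt, hAt, smul_neg, neg_add]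
  · calc (K * G + (2 : ℝ) • A) * (K * G + (2 : ℝ) • A)
        = (K * G) * (K * G) + (2 : ℝ) • (K * G * A) + (2 : ℝ) • (A * (K * G))
          + (4 : ℝ) • (A * A) := by
          rw [Matrix.add_mul, Matrix.mul_add, Matrix.mul_add, smul_mul_assoc, smul_mul_assoc,
            mul_smul_comm, mul_smul_comm, smul_smul]
          module
      _ = diagonal d - 2 := by
          rw [hKGsq, hKGA, hAKG, hAA]
          module

theorem exists_transpose_eq_neg_mul_self_eq_add_transpose_sub_two (hR : Rᵀ * R = 1)
    (hdet : R.det = 1) : ∃ W : Matrix ι ι ℝ, Wᵀ = -W ∧ W * W = R + Rᵀ - 2 := by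
  have hS : (R + Rᵀ).IsHermitian := by
    rw [IsHermitian, conjTranspose_eq_transpose_of_trivial, transpose_add, transpose_transpose,
      add_comm]
  set U : Matrix ι ι ℝ := (hS.eigenvectorUnitary : Matrix ι ι ℝ)
  have hUU : Uᵀ * U = 1 := by
    simpa [U, star_eq_conjTranspose] using Unitary.coe_star_mul_self hS.eigenvectorUnitary
  have hUU' : U * Uᵀ = 1 := mul_eq_one_comm.mp hUU
  have hdiag : Uᵀ * (R + Rᵀ) * U = diagonal hS.eigenvalues := by
    simpa [U, star_eq_conjTranspose, Function.comp_def] using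
      hS.conjStarAlgAut_star_eigenvectorUnitary
  set R' := Uᵀ * R * U
  have hR' : R'ᵀ * R' = 1 := by
    simp only [R', transpose_mul, transpose_transpose, Matrix.mul_assoc]
    rw [← Matrix.mul_assoc U, hUU', Matrix.one_mul, ← Matrix.mul_assoc Rᵀ, hR, Matrix.one_mul, hUU]
  have hdet' : R'.det = 1 := by
    rw [det_mul, det_mul, hdet, mul_one, ← det_mul, hUU, det_one]
  have hd' : R' + R'ᵀ = diagonal hS.eigenvalues := by
    rw [← hdiag, transpose_mul, transpose_mul, transpose_transpose, ← Matrix.mul_assoc,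
      Matrix.mul_add, Matrix.add_mul]
  obtain ⟨W, hW, hWW⟩ := exists_transpose_eq_neg_mul_self_eq_diagonal_sub_two hR' hdet' hd'
  refine ⟨U * W * Uᵀ, ?_, ?_⟩
  · rw [transpose_mul, transpose_mul, transpose_transpose, hW, Matrix.neg_mul, Matrix.mul_neg,
      Matrix.mul_assoc]
  · calc U * W * Uᵀ * (U * W * Uᵀ) = U * (W * W) * Uᵀ := by
          simp only [Matrix.mul_assoc]
          rw [← Matrix.mul_assoc Uᵀ, hUU, Matrix.one_mul]
      _ = (U * Uᵀ) * (R + Rᵀ) * (U * Uᵀ) - 2 * (U * Uᵀ) := by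
          rw [hWW, ← hdiag]
          noncomm_ring
      _ = R + Rᵀ - 2 := by rw [hUU', Matrix.one_mul, Matrix.mul_one, Matrix.mul_one]

theorem eq_one_of_add_transpose_eq_two (hR : Rᵀ * R = 1) (h : R + Rᵀ = 2) : R = 1 := by
  have h0 : (R - 1)ᵀ * (R - 1) = 0 := by
    calc (R - 1)ᵀ * (R - 1) = Rᵀ * R + 1 - (R + Rᵀ) := by
          rw [transpose_sub, transpose_one]; noncomm_ring
      _ = 0 := by rw [hR, h, one_add_one_eq_two, sub_self]
  exact sub_eq_zero.mp (eq_zero_of_transpose_mul_self_eq_zero h0)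

end SkewSquareRoot

/-- If `I` maximizes `F` over `SO(n)`, then the maximizer is unique (`𝓡 = {I}`) if and only
if `F(W²) < 0` for every nonzero skew-symmetric `W`. -/
theorem optRot_singleton_iff_strict (n : ℕ)
    (F : Matrix (Fin n) (Fin n) ℝ →ₗ[ℝ] ℝ)
    (hI : (1 : Matrix (Fin n) (Fin n) ℝ) ∈ optRot n F) :
    optRot n F = {1} ↔
      ∀ W : Matrix (Fin n) (Fin n) ℝ, Wᵀ = -W → W ≠ 0 → F (W * W) < 0 := by
  constructor
  · intro hR W hW hW0
    refine (map_mul_self_nonpos hI hW).lt_of_ne fun h => hW0 ?_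
    have hC := cayley_mem_optRot hI hW h
    rwa [hR, Set.mem_singleton_iff, cayley_eq_one_iff hW] at hC
  · intro hstrict
    refine Set.eq_singleton_iff_unique_mem.mpr ⟨hI, fun R hR => ?_⟩
    obtain ⟨W, hW, hWW⟩ :=
      exists_transpose_eq_neg_mul_self_eq_add_transpose_sub_two hR.1.1 hR.1.2
    have hFR : F R = F 1 := le_antisymm (hI.2 R hR.1) (hR.2 1 hI.1)
    have hFW : F (W * W) = 0 := by
      rw [hWW, map_sub, map_add, map_transpose hI, hFR, ← one_add_one_eq_two, map_add, sub_self]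
    obtain rfl : W = 0 := by_contra fun h => (hstrict W hW h).ne hFW
    rw [Matrix.zero_mul, eq_comm, sub_eq_zero] at hWW
    exact eq_one_of_add_transpose_eq_two hR.1.1 hWW
end
end

section
/- Let F(A) = ⟨S, A⟩ with S symmetric having eigenvalues s₁,…,s_n, and suppose I maximizes F over SO(n). Then sᵢ + sⱼ ≥ 0 for all i ≠ j. -/
open Matrix
noncomputable section

/-- If `F(A) = ⟨S, A⟩` with `S` symmetric with eigenvalues `s₁,…,s_n`, and `I` maximizes `F`
over `SO(n)`, then `sᵢ + sⱼ ≥ 0` for all `i ≠ j`. -/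
theorem eigenvalue_sums_nonneg_of_id_maximizer (n : ℕ)
    (S : Matrix (Fin n) (Fin n) ℝ) (hS : Sᵀ = S)
    (s : Fin n → ℝ) (R : Matrix (Fin n) (Fin n) ℝ) (hR : R ∈ SO n)
    (hdiag : S = Rᵀ * Matrix.diagonal s * R)
    (hmax : ∀ Q ∈ SO n, (Sᵀ * Q).trace ≤ (Sᵀ * (1 : Matrix (Fin n) (Fin n) ℝ)).trace) :
    ∀ i j : Fin n, i ≠ j → 0 ≤ s i + s j := by
  intro i j hij
  obtain ⟨hRo, hRdet⟩ := hR
  have hRR : R * Rᵀ = 1 := mul_eq_one_comm.mp hRo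
  set d : Fin n → ℝ := fun k => if k = i ∨ k = j then -1 else 1 with hd
  set G : Matrix (Fin n) (Fin n) ℝ := diagonal d with hG
  have hdd : ∀ k, d k * d k = 1 := by
    intro k; simp only [hd]; split <;> norm_num
  have hGG : G * G = 1 := by
    rw [hG, diagonal_mul_diagonal]
    have h1 : (fun k => d k * d k) = fun _ => (1:ℝ) := funext fun k => hdd k
    rw [h1]
    exact diagonal_one
  have hGt : Gᵀ = G := diagonal_transpose d
  have hGdet : G.det = 1 := by
    rw [hG, det_diagonal]
    rw [← Finset.prod_mul_prod_compl ({i, j} : Finset (Fin n))]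
    have h1 : ∏ k ∈ ({i, j} : Finset (Fin n)), d k = 1 := by
      rw [Finset.prod_pair hij]
      simp [hd]
    have h2 : ∏ k ∈ ({i, j} : Finset (Fin n))ᶜ, d k = 1 := by
      apply Finset.prod_eq_one
      intro k hk
      simp only [Finset.mem_compl, Finset.mem_insert, Finset.mem_singleton, not_or] at hk
      simp [hd, hk.1, hk.2]
    rw [h1, h2, mul_one]
  set Q : Matrix (Fin n) (Fin n) ℝ := Rᵀ * G * R with hQ
  have hQt : Qᵀ = Q := by
    rw [hQ, transpose_mul, transpose_mul, transpose_transpose, hGt, Matrix.mul_assoc]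
  have hQSO : Q ∈ SO n := by
    constructor
    · rw [hQt, hQ]
      calc Rᵀ * G * R * (Rᵀ * G * R)
          = Rᵀ * (G * ((R * Rᵀ) * (G * R))) := by
            simp only [Matrix.mul_assoc]
        _ = 1 := by
            rw [hRR, Matrix.one_mul, ← Matrix.mul_assoc G G R, hGG, Matrix.one_mul, hRo]
    · rw [hQ, det_mul, det_mul, det_transpose, hRdet, hGdet]
      norm_num
  have key := hmax Q hQSO
  rw [hS] at key
  have hSQ : (S * Q).trace = ∑ k, s k * d k := by
    have : S * Q = Rᵀ * ((diagonal s * G) * R) := by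
      rw [hdiag, hQ]
      calc Rᵀ * diagonal s * R * (Rᵀ * G * R)
          = Rᵀ * (diagonal s * ((R * Rᵀ) * (G * R))) := by
            simp only [Matrix.mul_assoc]
        _ = Rᵀ * ((diagonal s * G) * R) := by
            rw [hRR, Matrix.one_mul, Matrix.mul_assoc]
    rw [this, trace_mul_comm, Matrix.mul_assoc, hRR, Matrix.mul_one, hG,
      diagonal_mul_diagonal, trace_diagonal]
  have hS1 : (S * (1 : Matrix (Fin n) (Fin n) ℝ)).trace = ∑ k, s k := by
    rw [Matrix.mul_one, hdiag, trace_mul_comm, ← Matrix.mul_assoc, hRR, Matrix.one_mul,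
      trace_diagonal]
  rw [hSQ, hS1] at key
  have hdiff : ∑ k, s k - ∑ k, s k * d k = 2 * (s i + s j) := by
    rw [← Finset.sum_sub_distrib]
    have : ∀ k, s k - s k * d k = if k = i ∨ k = j then 2 * s k else 0 := by
      intro k; simp only [hd]; split <;> ring
    rw [Finset.sum_congr rfl fun k _ => this k]
    have h3 : ∀ k, (if k = i ∨ k = j then 2 * s k else 0)
        = if k ∈ ({i, j} : Finset (Fin n)) then 2 * s k else 0 := by
      intro k; simp [Finset.mem_insert]
    rw [Finset.sum_congr rfl fun k _ => h3 k, Finset.sum_ite_mem, Finset.univ_inter,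
      Finset.sum_pair hij]
    ring
  linarith
end
end
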